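/- arXiv:1710.04529 — 2 statements merged into one kernel-verified Lean document; each statement's English description precedes it below -/
import Mathlib

section
/- Let Ω be a bounded open subset of ℝ^d, T > 0 and Ω_T = Ω × (0,T). Let f : ℝ → ℝ^d be C¹ with bounded derivative, let B : ℝ → ℝ be C³ and bounded with B(s) ≥ r > 0 for all s ∈ ℝ, and let ε > 0. If u ∈ C²(closure(Ω_T)) satisfies ∂_t u + ∇·(f(u)) = ε ∇·(B(u) ∇u) pointwise in Ω_T, u = 0 on ∂Ω × (0,T), and u(x,0) = u₀(x) on Ω for a bounded function u₀, then for almost every t ∈ (0,T), sup_{x∈Ω} |u(x,t)| ≤ ess sup_{x∈Ω} |u₀(x)|. -/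
open MeasureTheory Set Filter Topology

noncomputable section

/-- `j`-th spatial partial derivative of a function of (space, time). -/
def pdX (d : ℕ) (u : (Fin d → ℝ) × ℝ → ℝ) (j : Fin d) (p : (Fin d → ℝ) × ℝ) : ℝ :=
  fderiv ℝ u p (Pi.single j 1, 0)

/-- time partial derivative of a function of (space, time). -/
def pdT (d : ℕ) (u : (Fin d → ℝ) × ℝ → ℝ) (p : (Fin d → ℝ) × ℝ) : ℝ :=
  fderiv ℝ u p (0, 1)

/-- second spatial partial derivative in direction `j`. -/
def pdXX (d : ℕ) (u : (Fin d → ℝ) × ℝ → ℝ) (j : Fin d) (p : (Fin d → ℝ) × ℝ) : ℝ :=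
  fderiv ℝ (pdX d u j) p (Pi.single j 1, 0)

/-- spatial Laplacian of a function of (space, time). -/
def lapX (d : ℕ) (u : (Fin d → ℝ) × ℝ → ℝ) (p : (Fin d → ℝ) × ℝ) : ℝ :=
  ∑ j, pdXX d u j p

/-- Euclidean norm of the spatial gradient of a function of (space, time). -/
def gradXNorm (d : ℕ) (u : (Fin d → ℝ) × ℝ → ℝ) (p : (Fin d → ℝ) × ℝ) : ℝ :=
  Real.sqrt (∑ j, (pdX d u j p) ^ 2)

/-- `j`-th partial derivative of a function of space only. -/
def pd (d : ℕ) (v : (Fin d → ℝ) → ℝ) (j : Fin d) (x : Fin d → ℝ) : ℝ :=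
  fderiv ℝ v x (Pi.single j 1)

/-- Laplacian of a function of space only. -/
def lap (d : ℕ) (v : (Fin d → ℝ) → ℝ) (x : Fin d → ℝ) : ℝ :=
  ∑ j, pd d (pd d v j) j x

/-- Euclidean norm of the gradient of a function of space only. -/
def gradNorm (d : ℕ) (v : (Fin d → ℝ) → ℝ) (x : Fin d → ℝ) : ℝ :=
  Real.sqrt (∑ j, (pd d v j x) ^ 2)

/-- `L^∞(Ω)` norm (essential supremum of the absolute value over `Ω`). -/
def linf (d : ℕ) (Ω : Set (Fin d → ℝ)) (v : (Fin d → ℝ) → ℝ) : ℝ :=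
  essSup (fun x => |v x|) (volume.restrict Ω)

/-- `sup_{y ∈ s} |g'(y)|`. -/
def supDerivOn (g : ℝ → ℝ) (s : Set ℝ) : ℝ :=
  sSup ((fun y => |deriv g y|) '' s)

/-- The flux `f = (f_1, …, f_d)` is `C¹` with bounded derivative. -/
def FluxOK (d : ℕ) (f : Fin d → ℝ → ℝ) : Prop :=
  (∀ j, ContDiff ℝ 1 (f j)) ∧ ∃ M, ∀ j y, |deriv (f j) y| ≤ M

/-- The diffusion coefficient `B` is `C³`, bounded, and `B ≥ r`. -/
def DiffusionOK (B : ℝ → ℝ) (r : ℝ) : Prop :=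
  ContDiff ℝ 3 B ∧ (∃ M, ∀ s, |B s| ≤ M) ∧ 0 < r ∧ ∀ s, r ≤ B s

/-- A classical solution (in `C²(closure Ω_T)`) of the regularized viscosity problem
`∂ₜ u + ∇·(f(u)) = ε ∇·(B(u) ∇u)` on `Ω_T = Ω × (0,T)`, vanishing on `∂Ω × (0,T)`,
with initial data `u0e` at `t = 0`. -/
structure IsSolution (d : ℕ) (Ω : Set (Fin d → ℝ)) (T : ℝ)
    (f : Fin d → ℝ → ℝ) (B : ℝ → ℝ) (ε : ℝ)
    (u0e : (Fin d → ℝ) → ℝ) (u : (Fin d → ℝ) × ℝ → ℝ) : Prop where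
  smooth : ContDiffOn ℝ 2 u (closure (Ω ×ˢ Ioo (0:ℝ) T))
  pde : ∀ x ∈ Ω, ∀ t ∈ Ioo (0:ℝ) T,
    pdT d u (x, t) + ∑ j, deriv (f j) (u (x, t)) * pdX d u j (x, t)
      = ε * (B (u (x, t)) * lapX d u (x, t)
          + deriv B (u (x, t)) * ∑ j, pdX d u j (x, t) ^ 2)
  bdry : ∀ x ∈ frontier Ω, ∀ t ∈ Ioo (0:ℝ) T, u (x, t) = 0
  init : ∀ x ∈ Ω, u (x, 0) = u0e x

/-- A standard mollifier profile on `ℝ^d`: smooth, nonnegative, supported in the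
closed Euclidean unit ball, with integral 1. -/
def IsMollifier (d : ℕ) (ρ : (Fin d → ℝ) → ℝ) : Prop :=
  ContDiff ℝ (⊤ : ℕ∞) ρ ∧ HasCompactSupport ρ ∧ (∀ x, 0 ≤ ρ x) ∧
  (∀ x, ρ x ≠ 0 → ∑ j, (x j) ^ 2 ≤ 1) ∧ (∫ x, ρ x) = 1

/-- Mollification `v ⋆ ρ_ε` with `ρ_ε(x) = ε^{-d} ρ(x/ε)`. -/
def mollify (d : ℕ) (ρ : (Fin d → ℝ) → ℝ) (ε : ℝ) (v : (Fin d → ℝ) → ℝ)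
    (x : Fin d → ℝ) : ℝ :=
  ∫ y, v y * ((ε ^ d)⁻¹ * ρ (ε⁻¹ • (x - y)))

/-- `v ∈ L^∞` with essential support a compact subset of `Ω`, extended by zero
outside `Ω`. -/
def LinfCompactData (d : ℕ) (Ω : Set (Fin d → ℝ)) (v : (Fin d → ℝ) → ℝ) : Prop :=
  (∃ M, ∀ᵐ x, |v x| ≤ M) ∧ (∀ x ∉ Ω, v x = 0) ∧
  ∃ K, IsCompact K ∧ K ⊆ Ω ∧ ∀ᵐ x, x ∉ K → v x = 0

/-- The set of numbers `∫_Ω v · div φ` over test vector fields `φ ∈ C_c¹(Ω; ℝ^d)`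
with `|φ| ≤ 1`, whose supremum is the total variation. -/
def tvSet (d : ℕ) (Ω : Set (Fin d → ℝ)) (v : (Fin d → ℝ) → ℝ) : Set ℝ :=
  { a | ∃ φ : Fin d → (Fin d → ℝ) → ℝ,
      (∀ j, ContDiff ℝ 1 (φ j)) ∧ (∀ j, HasCompactSupport (φ j)) ∧
      (∀ j, tsupport (φ j) ⊆ Ω) ∧ (∀ x, ∑ j, (φ j x) ^ 2 ≤ 1) ∧
      a = ∫ x in Ω, v x * ∑ j, pd d (φ j) j x }

/-- Total variation of `v` over `Ω`. -/
def TV (d : ℕ) (Ω : Set (Fin d → ℝ)) (v : (Fin d → ℝ) → ℝ) : ℝ :=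
  sSup (tvSet d Ω v)

/-- `v ∈ BV(Ω)`: integrable with finite total variation. -/
def MemBV (d : ℕ) (Ω : Set (Fin d → ℝ)) (v : (Fin d → ℝ) → ℝ) : Prop :=
  IntegrableOn v Ω ∧ BddAbove (tvSet d Ω v)


lemma second_deriv_test {g G : ℝ → ℝ} {c : ℝ}
    (hg : ∀ᶠ s in 𝓝 (0:ℝ), HasDerivAt g (G s) s)
    (hG : HasDerivAt G c 0) (hmax : IsLocalMax g 0) : c ≤ 0 := by
  by_contra hc
  push_neg at hc
  have hG0 : G 0 = 0 := hmax.hasDerivAt_eq_zero hg.self_of_nhds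
  have hslope : Tendsto (slope G 0) (𝓝[≠] (0:ℝ)) (𝓝 c) :=
    hasDerivAt_iff_tendsto_slope.1 hG
  have hpos : ∀ᶠ s in 𝓝[>] (0:ℝ), 0 < G s := by
    have h1 : ∀ᶠ s in 𝓝[>] (0:ℝ), 0 < slope G 0 s := by
      have := hslope.mono_left (nhdsWithin_mono _ (fun s hs => ne_of_gt hs))
      exact this.eventually (eventually_gt_nhds hc)
    filter_upwards [h1, self_mem_nhdsWithin] with s hs hs'
    have he : slope G 0 s = G s / s := by
      rw [slope_def_field]; simp [hG0]
    rw [he] at hs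
    have := mul_pos hs (show (0:ℝ) < s from hs')
    rwa [div_mul_cancel₀ _ (ne_of_gt hs')] at this
  obtain ⟨η, hη, hIoc⟩ := mem_nhdsGT_iff_exists_Ioc_subset.1 hpos
  have hmax' : ∀ᶠ s in 𝓝 (0:ℝ), g s ≤ g 0 := hmax
  obtain ⟨η₂, hη₂, hball⟩ := Metric.eventually_nhds_iff.1 (hg.and hmax')
  set a := min η (η₂ / 2) with ha
  have ha0 : 0 < a := lt_min hη (by linarith)
  have haη₂ : a < η₂ := lt_of_le_of_lt (min_le_right _ _) (by linarith)
  have hdist : ∀ s ∈ Icc (0:ℝ) a, dist s 0 < η₂ := by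
    intro s hs
    rw [Real.dist_eq, sub_zero, abs_of_nonneg hs.1]
    exact lt_of_le_of_lt hs.2 haη₂
  have hmono : StrictMonoOn g (Icc 0 a) := by
    apply strictMonoOn_of_deriv_pos (convex_Icc 0 a)
    · intro s hs
      exact ((hball (hdist s hs)).1.differentiableAt).continuousAt.continuousWithinAt
    · intro s hs
      rw [interior_Icc] at hs
      rw [(hball (hdist s ⟨hs.1.le, hs.2.le⟩)).1.deriv]
      exact hIoc ⟨hs.1, le_trans hs.2.le (min_le_left _ _)⟩
  have h1 : g 0 < g a := hmono (left_mem_Icc.2 ha0.le) (right_mem_Icc.2 ha0.le) ha0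
  have h2 : g a ≤ g 0 := (hball (hdist a (right_mem_Icc.2 ha0.le))).2
  linarith

lemma left_slope {φ : ℝ → ℝ} {c t δ : ℝ} (ht : 0 < t) (hφ : HasDerivAt φ c t)
    (h : ∀ s ∈ Ico 0 t, δ * (t - s) ≤ φ t - φ s) : δ ≤ c := by
  have hslope : Tendsto (slope φ t) (𝓝[<] t) (𝓝 c) :=
    (hasDerivAt_iff_tendsto_slope.1 hφ).mono_left
      (nhdsWithin_mono _ (fun s hs => ne_of_lt hs))
  refine ge_of_tendsto hslope ?_
  filter_upwards [Ioo_mem_nhdsLT_of_mem (⟨ht, le_refl t⟩ : t ∈ Ioc 0 t)] with s hs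
  have hst : s - t < 0 := sub_neg.2 hs.2
  have key : φ s - φ t ≤ δ * (s - t) := by
    have := h s ⟨hs.1.le, hs.2⟩; nlinarith
  rw [slope_def_field, le_div_iff_of_neg hst]
  nlinarith


variable {E : Type*} [NormedAddCommGroup E] [NormedSpace ℝ E]


lemma line_map_hasDerivAt (p v : E) (s : ℝ) : HasDerivAt (fun s : ℝ => p + s • v) v s := by
  simpa using ((hasDerivAt_id s).smul_const v).const_add p

lemma line_hasDerivAt {u : E → ℝ} {p v : E} (h : ∀ᶠ q in 𝓝 p, DifferentiableAt ℝ u q) :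
    ∀ᶠ s in 𝓝 (0:ℝ), HasDerivAt (fun s => u (p + s • v)) (fderiv ℝ u (p + s • v) v) s := by
  have hcont : Tendsto (fun s : ℝ => p + s • v) (𝓝 0) (𝓝 p) := by
    have := (line_map_hasDerivAt p v 0).continuousAt.tendsto
    simpa using this
  filter_upwards [hcont.eventually h] with s hs
  exact hs.hasFDerivAt.comp_hasDerivAt s (line_map_hasDerivAt p v s)

lemma line_hasDerivAt2 {u : E → ℝ} {p v : E} (h : ContDiffAt ℝ 2 u p) :
    HasDerivAt (fun s : ℝ => fderiv ℝ u (p + s • v) v)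
      (fderiv ℝ (fun q => fderiv ℝ u q v) p v) 0 := by
  have hF : DifferentiableAt ℝ (fun q => fderiv ℝ u q v) p := by
    have h1 : ContDiffAt ℝ 1 (fderiv ℝ u) p := h.fderiv_right (by norm_num)
    have h2 : DifferentiableAt ℝ (fderiv ℝ u) p := h1.differentiableAt (by norm_num)
    exact (ContinuousLinearMap.apply ℝ ℝ v).differentiableAt.comp p h2
  have hd : HasFDerivAt (fun q => fderiv ℝ u q v) (fderiv ℝ (fun q => fderiv ℝ u q v) p)
      (p + (0:ℝ) • v) := by simpa using hF.hasFDerivAt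
  exact hd.comp_hasDerivAt 0 (line_map_hasDerivAt p v 0)


lemma init_bound (d : ℕ) (Ω : Set (Fin d → ℝ)) (hΩo : IsOpen Ω) (T : ℝ) (hT : 0 < T)
    (f : Fin d → ℝ → ℝ) (B : ℝ → ℝ) (ε : ℝ)
    (u0 : (Fin d → ℝ) → ℝ) (hu0 : ∃ M, ∀ x, |u0 x| ≤ M)
    (u : (Fin d → ℝ) × ℝ → ℝ) (hu : IsSolution d Ω T f B ε u0 u) :
    ∀ x ∈ closure Ω, |u (x, 0)| ≤ linf d Ω u0 := by
  obtain ⟨M, hM⟩ := hu0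
  set L := linf d Ω u0 with hL
  have hclQ : closure (Ω ×ˢ Ioo (0:ℝ) T) = closure Ω ×ˢ Icc 0 T := by
    rw [closure_prod_eq, closure_Ioo hT.ne]
  have hcont : ContinuousOn u (closure (Ω ×ˢ Ioo (0:ℝ) T)) := hu.smooth.continuousOn
  have hmaps : ∀ x ∈ closure Ω, ((x, 0) : (Fin d → ℝ) × ℝ) ∈ closure (Ω ×ˢ Ioo (0:ℝ) T) := by
    intro x hx
    rw [hclQ]
    exact ⟨hx, le_rfl, hT.le⟩
  -- step A : pointwise bound on Ω
  have stepA : ∀ x ∈ Ω, |u (x, 0)| ≤ L := by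
    by_contra hcon
    push_neg at hcon
    obtain ⟨x, hxΩ, hxL⟩ := hcon
    have hcont0 : ContinuousOn (fun x => u (x, 0)) Ω := by
      apply hcont.comp (Continuous.continuousOn (by continuity))
      intro y hy
      exact hmaps y (subset_closure hy)
    set S := Ω ∩ (fun x => |u (x, 0)|) ⁻¹' (Ioi L) with hS
    have hSopen : IsOpen S :=
      (continuous_abs.comp_continuousOn hcont0).isOpen_inter_preimage hΩo isOpen_Ioi
    have hSpos : 0 < volume S := hSopen.measure_pos volume ⟨x, hxΩ, hxL⟩
    have hbdd : IsBoundedUnder (· ≤ ·) (ae (volume.restrict Ω)) (fun x => |u0 x|) :=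
      isBoundedUnder_of ⟨M, fun y => hM y⟩
    have h1 := ae_le_essSup (f := fun x => |u0 x|) (μ := volume.restrict Ω) hbdd
    rw [ae_restrict_iff' hΩo.measurableSet] at h1
    have hnull : volume {y | ¬ (y ∈ Ω → |u0 y| ≤ L)} = 0 := ae_iff.1 h1
    have hsub : S ⊆ {y | ¬ (y ∈ Ω → |u0 y| ≤ L)} := by
      intro y ⟨hyΩ, hyL⟩
      intro hcontra
      have := hcontra hyΩ
      rw [← hu.init y hyΩ] at this
      exact absurd this (not_le.2 hyL)
    have : volume S = 0 := measure_mono_null hsub hnull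
    exact absurd this (ne_of_gt hSpos)
  -- step B : extend to the closure by continuity
  intro x hx
  set D := closure (Ω ×ˢ Ioo (0:ℝ) T) ∩ u ⁻¹' (Icc (-L) L) with hD
  have hDclosed : IsClosed D :=
    hcont.preimage_isClosed_of_isClosed isClosed_closure isClosed_Icc
  have hsub2 : (Ω ×ˢ ({0} : Set ℝ)) ⊆ D := by
    rintro ⟨y, t⟩ ⟨hy, ht⟩
    rw [mem_singleton_iff] at ht
    subst ht
    exact ⟨hmaps y (subset_closure hy), abs_le.1 (stepA y hy)⟩
  have hclsub : closure Ω ×ˢ ({0} : Set ℝ) ⊆ D := by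
    have h2 : closure Ω ×ˢ ({0} : Set ℝ) = closure (Ω ×ˢ ({0} : Set ℝ)) := by
      rw [closure_prod_eq, closure_singleton]
    rw [h2]
    exact closure_minimal hsub2 hDclosed
  have : ((x, 0) : (Fin d → ℝ) × ℝ) ∈ D := hclsub ⟨hx, rfl⟩
  exact abs_le.2 this.2


set_option maxHeartbeats 1000000 in
lemma key (d : ℕ) (Ω : Set (Fin d → ℝ)) (hΩo : IsOpen Ω)
    (hΩb : Bornology.IsBounded Ω) (T : ℝ)
    (f : Fin d → ℝ → ℝ) (B : ℝ → ℝ) (r : ℝ) (hB : DiffusionOK B r)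
    (ε : ℝ) (hε : 0 < ε) (u0 : (Fin d → ℝ) → ℝ)
    (u : (Fin d → ℝ) × ℝ → ℝ) (hu : IsSolution d Ω T f B ε u0 u)
    (σ : ℝ) (hσ : σ = 1 ∨ σ = -1) (L : ℝ) (hL0 : 0 ≤ L)
    (hinit : ∀ x ∈ closure Ω, |u (x, 0)| ≤ L)
    (t₀ : ℝ) (ht₀ : t₀ ∈ Ioo 0 T) (x₀ : Fin d → ℝ) (hx₀ : x₀ ∈ Ω) :
    σ * u (x₀, t₀) ≤ L := by
  have hσabs : ∀ y : ℝ, σ * y ≤ |y| := by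
    intro y; rcases hσ with h | h <;> rw [h] <;> simp [neg_le_abs, le_abs_self]
  have hσne : σ ≠ 0 := by rcases hσ with h | h <;> rw [h] <;> norm_num
  have main : ∀ δ : ℝ, 0 < δ → σ * u (x₀, t₀) ≤ L + δ * t₀ := by
    intro δ hδ
    set w : (Fin d → ℝ) × ℝ → ℝ := fun q => σ * u q - δ * q.2 with hw
    set K : Set ((Fin d → ℝ) × ℝ) := closure Ω ×ˢ Icc 0 t₀ with hK
    have hKsub : K ⊆ closure (Ω ×ˢ Ioo (0:ℝ) T) := by
      rw [closure_prod_eq, closure_Ioo (ne_of_lt (lt_trans ht₀.1 ht₀.2))]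
      exact prod_mono subset_rfl (Icc_subset_Icc le_rfl ht₀.2.le)
    have hKcpt : IsCompact K :=
      (Metric.isCompact_of_isClosed_isBounded isClosed_closure hΩb.closure).prod isCompact_Icc
    have hKne : K.Nonempty := ⟨(x₀, 0), subset_closure hx₀, le_rfl, ht₀.1.le⟩
    have hwcont : ContinuousOn w K := by
      apply ContinuousOn.sub
      · exact (hu.smooth.continuousOn.mono hKsub).const_smul σ
      · exact (continuous_const.mul (continuous_snd)).continuousOn
    obtain ⟨p, hpK, hpmax⟩ := hKcpt.exists_isMaxOn hKne hwcont
    obtain ⟨x', t'⟩ := p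
    have hx'cl : x' ∈ closure Ω := hpK.1
    have ht' : t' ∈ Icc 0 t₀ := hpK.2
    have hwle : w (x', t') ≤ L := by
      rcases eq_or_lt_of_le ht'.1 with h0 | h0
      · have he : w (x', t') = σ * u (x', 0) := by rw [hw]; simp [← h0]
        rw [he]
        exact le_trans (hσabs _) (hinit x' hx'cl)
      · rcases (closure_eq_interior_union_frontier Ω ▸ hx'cl) with hxin | hxfr
        swap
        · have hu0' : u (x', t') = 0 := hu.bdry x' hxfr t' ⟨h0, lt_of_le_of_lt ht'.2 ht₀.2⟩
          have he : w (x', t') = -(δ * t') := by rw [hw]; simp [hu0']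
          rw [he]
          have : 0 ≤ δ * t' := mul_nonneg hδ.le (le_of_lt h0)
          linarith
        · exfalso
          rw [hΩo.interior_eq] at hxin
          set p : (Fin d → ℝ) × ℝ := (x', t') with hp
          have hpmem : p ∈ Ω ×ˢ Ioo (0:ℝ) T :=
            ⟨hxin, h0, lt_of_le_of_lt ht'.2 ht₀.2⟩
          have hopen : IsOpen (Ω ×ˢ Ioo (0:ℝ) T) := hΩo.prod isOpen_Ioo
          have hC2 : ContDiffAt ℝ 2 u p :=
            hu.smooth.contDiffAt
              (mem_nhds_iff.2 ⟨Ω ×ˢ Ioo (0:ℝ) T, subset_closure, hopen, hpmem⟩)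
          have hev : ∀ᶠ q in 𝓝 p, DifferentiableAt ℝ u q := by
            filter_upwards [hC2.eventually (by norm_num)] with q hq
            exact hq.differentiableAt (by norm_num)
          have hloc : ∀ j : Fin d,
              IsLocalMax (fun s : ℝ => σ * u (p + s • ((Pi.single j 1 : Fin d → ℝ), (0:ℝ)))) 0 := by
            intro j
            set v : (Fin d → ℝ) × ℝ := (Pi.single j 1, 0) with hv
            have hmem : ∀ᶠ s : ℝ in 𝓝 0, p + s • v ∈ K := by
              have hcont : Continuous (fun s : ℝ => p + s • v) := by continuity
              have h4 : ∀ᶠ s : ℝ in 𝓝 0, p + s • v ∈ Ω ×ˢ Ioo (0:ℝ) T := by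
                have h5 := hcont.tendsto 0
                rw [show (p + (0:ℝ) • v) = p by simp] at h5
                exact h5.eventually (hopen.mem_nhds hpmem)
              filter_upwards [h4] with s hs
              refine ⟨subset_closure hs.1, ?_⟩
              have h6 : (p + s • v).2 = t' := by simp [hv, hp]
              rw [h6]; exact ht'
            filter_upwards [hmem] with s hs
            have h3 : w (p + s • v) ≤ w p := hpmax hs
            have h2 : p + s • v = ((x' + s • (Pi.single j 1 : Fin d → ℝ), t') : (Fin d → ℝ) × ℝ) := by
              simp [hp, hv, Prod.ext_iff]
            rw [h2] at h3
            simp only [hw, hp] at h3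
            simp only [h2, zero_smul, add_zero, hp]
            have h2' : (x', t') + s • v = (x' + s • Pi.single j 1, t') := h2
            rw [h2']
            linarith
          have hpdX : ∀ j, pdX d u j p = 0 := by
            intro j
            set v : (Fin d → ℝ) × ℝ := (Pi.single j 1, 0) with hv
            have hd : HasDerivAt (fun s : ℝ => σ * u (p + s • v)) (σ * fderiv ℝ u p v) 0 := by
              have h8 := (line_hasDerivAt (v := v) hev).self_of_nhds
              rw [show (p + (0:ℝ) • v) = p by simp] at h8
              exact h8.const_mul σ
            have h9 := (hloc j).hasDerivAt_eq_zero hd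
            have h10 : fderiv ℝ u p v = 0 := by
              rcases mul_eq_zero.1 h9 with h | h
              · exact absurd h hσne
              · exact h
            exact h10
          have hpdXX : ∀ j, σ * pdXX d u j p ≤ 0 := by
            intro j
            set v : (Fin d → ℝ) × ℝ := (Pi.single j 1, 0) with hv
            have hg : ∀ᶠ s in 𝓝 (0:ℝ), HasDerivAt (fun s : ℝ => σ * u (p + s • v))
                (σ * fderiv ℝ u (p + s • v) v) s := by
              filter_upwards [line_hasDerivAt (v := v) hev] with s hs
              exact hs.const_mul σ
            have hG : HasDerivAt (fun s : ℝ => σ * fderiv ℝ u (p + s • v) v)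
                (σ * fderiv ℝ (fun q => fderiv ℝ u q v) p v) 0 :=
              (line_hasDerivAt2 hC2).const_mul σ
            exact second_deriv_test hg hG (hloc j)
          have hpdT : δ ≤ σ * pdT d u p := by
            have hφ : HasDerivAt (fun t : ℝ => σ * u (x', t)) (σ * pdT d u p) t' := by
              have hl : HasDerivAt (fun t : ℝ => ((x', t) : (Fin d → ℝ) × ℝ))
                  (((0 : Fin d → ℝ), (1:ℝ))) t' :=
                HasDerivAt.prodMk (hasDerivAt_const t' x') (hasDerivAt_id t')
              have hdu : DifferentiableAt ℝ u p := hev.self_of_nhds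
              exact (hdu.hasFDerivAt.comp_hasDerivAt t' hl).const_mul σ
            apply left_slope h0 hφ
            intro s hs
            have hmem : ((x', s) : (Fin d → ℝ) × ℝ) ∈ K := ⟨hx'cl, hs.1, le_trans hs.2.le ht'.2⟩
            have h3 : w (x', s) ≤ w p := hpmax hmem
            simp only [hw, hp] at h3
            show δ * (t' - s) ≤ σ * u (x', t') - σ * u (x', s)
            linarith
          have hpde := hu.pde x' hxin t' ⟨h0, lt_of_le_of_lt ht'.2 ht₀.2⟩
          have hpX' : ∀ j, pdX d u j (x', t') = 0 := fun j => hpdX j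
          have hsum0 : ∑ j, deriv (f j) (u (x', t')) * pdX d u j (x', t') = 0 := by
            apply Finset.sum_eq_zero; intro j _
            rw [hpX' j]; ring
          have hsq0 : ∑ j, pdX d u j (x', t') ^ 2 = 0 := by
            apply Finset.sum_eq_zero; intro j _
            rw [hpX' j]; ring
          rw [hsum0, hsq0] at hpde
          have hpdT' : pdT d u (x', t') = ε * (B (u (x', t')) * lapX d u (x', t')) := by
            rw [mul_zero, add_zero, add_zero] at hpde
            linarith [hpde]
          have hlap : σ * lapX d u (x', t') ≤ 0 := by
            rw [lapX, Finset.mul_sum]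
            exact Finset.sum_nonpos (fun j _ => hpdXX j)
          have hBpos : 0 < B (u (x', t')) := lt_of_lt_of_le hB.2.2.1 (hB.2.2.2 _)
          have hfin : σ * pdT d u (x', t') ≤ 0 := by
            have he : σ * pdT d u (x', t') = ε * (B (u (x', t')) * (σ * lapX d u (x', t'))) := by
              rw [hpdT']; ring
            rw [he]
            apply mul_nonpos_of_nonneg_of_nonpos hε.le
            exact mul_nonpos_of_nonneg_of_nonpos hBpos.le hlap
          have : δ ≤ 0 := le_trans hpdT hfin
          linarith
    have hmem : ((x₀, t₀) : (Fin d → ℝ) × ℝ) ∈ K := ⟨subset_closure hx₀, ht₀.1.le, le_rfl⟩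
    have h3 : w (x₀, t₀) ≤ w (x', t') := hpmax hmem
    simp only [hw] at h3 hwle
    linarith
  refine le_of_forall_pos_le_add ?_
  intro η hη
  have := main (η / t₀) (div_pos hη ht₀.1)
  rwa [div_mul_cancel₀ _ (ne_of_gt ht₀.1)] at this

/-- maximum principle for the generalized viscosity problem with bounded
initial data: for a.e. `t ∈ (0,T)`, `sup_{x ∈ Ω} |u(x,t)| ≤ esssup_Ω |u₀|`. -/
theorem stmt0 (d : ℕ) (Ω : Set (Fin d → ℝ)) (hΩo : IsOpen Ω)
    (hΩb : Bornology.IsBounded Ω) (T : ℝ) (hT : 0 < T)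
    (f : Fin d → ℝ → ℝ) (hf : FluxOK d f)
    (B : ℝ → ℝ) (r : ℝ) (hB : DiffusionOK B r)
    (ε : ℝ) (hε : 0 < ε)
    (u0 : (Fin d → ℝ) → ℝ) (hu0 : ∃ M, ∀ x, |u0 x| ≤ M)
    (u : (Fin d → ℝ) × ℝ → ℝ) (hu : IsSolution d Ω T f B ε u0 u) :
    ∀ᵐ t ∂(volume.restrict (Ioo (0:ℝ) T)), ∀ x ∈ Ω, |u (x, t)| ≤ linf d Ω u0 := by
  have hinit := init_bound d Ω hΩo T hT f B ε u0 hu0 u hu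
  filter_upwards [ae_restrict_mem measurableSet_Ioo] with t ht
  intro x hx
  have hL0 : 0 ≤ linf d Ω u0 := (abs_nonneg _).trans (hinit x (subset_closure hx))
  have h1 := key d Ω hΩo hΩb T f B r hB ε hε u0 u hu 1 (Or.inl rfl) _ hL0 hinit t ht x hx
  have h2 := key d Ω hΩo hΩb T f B r hB ε hε u0 u hu (-1) (Or.inr rfl) _ hL0 hinit t ht x hx
  rw [abs_le]; constructor <;> linarith


end
end

section
/- Let Ω be a bounded open subset of ℝ^d, T > 0 and Ω_T = Ω × (0,T). Let f : ℝ → ℝ^d be C¹ with bounded derivative, let B : ℝ → ℝ be C³ and bounded with B(s) ≥ r > 0 for all s ∈ ℝ, and let ε > 0. Let u₀ ∈ L^∞(Ω) have essential support a compact subset of Ω, extend u₀ by zero to ℝ^d, and set u_{0ε} = u₀ ⋆ ρ_ε where (ρ_ε) is a standard mollifier on ℝ^d. If u^ε ∈ C²(closure(Ω_T)) is a classical solution of ∂_t u^ε + ∇·(f(u^ε)) = ε ∇·(B(u^ε) ∇u^ε) in Ω_T with u^ε = 0 on ∂Ω × (0,T) and u^ε(·,0) = u_{0ε}, then for almost every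 t ∈ (0,T), sup_{x∈Ω} |u^ε(x,t)| ≤ ‖u₀‖_{L^∞(Ω)}. -/
open MeasureTheory Set Filter Topology

noncomputable section

/-! ### Auxiliary lemmas -/

lemma aux_second_deriv_nonpos {h h' : ℝ → ℝ} {c : ℝ}
    (hmax : IsLocalMax h 0)
    (hd : ∀ᶠ s in 𝓝 (0:ℝ), HasDerivAt h (h' s) s)
    (hd' : HasDerivAt h' c 0) : c ≤ 0 := by
  by_contra hc
  push_neg at hc
  have h'0 : h' 0 = 0 := hmax.hasDerivAt_eq_zero hd.self_of_nhds
  have hslope : Tendsto (slope h' 0) (𝓝[≠] (0:ℝ)) (𝓝 c) :=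
    hasDerivAt_iff_tendsto_slope.1 hd'
  have hpos : ∀ᶠ s in 𝓝[≠] (0:ℝ), 0 < slope h' 0 s :=
    hslope.eventually (eventually_gt_nhds hc)
  rw [eventually_nhdsWithin_iff] at hpos
  have hmax' : ∀ᶠ s in 𝓝 (0:ℝ), h s ≤ h 0 := hmax
  have hall := (hd.and hmax').and hpos
  rw [Metric.eventually_nhds_iff] at hall
  obtain ⟨δ, hδ, H⟩ := hall
  have hb : 0 < δ / 2 := by positivity
  have hIcc : ∀ s ∈ Icc (0:ℝ) (δ/2), dist s 0 < δ := by
    intro s hs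
    rw [Real.dist_eq, sub_zero, abs_of_nonneg hs.1]
    linarith [hs.2]
  have hSM : StrictMonoOn h (Icc (0:ℝ) (δ/2)) := by
    apply strictMonoOn_of_deriv_pos (convex_Icc 0 (δ/2))
    · intro s hs
      exact ((H (hIcc s hs)).1.1.differentiableAt.continuousAt).continuousWithinAt
    · intro s hs
      rw [interior_Icc] at hs
      have h4 := H (hIcc s ⟨hs.1.le, hs.2.le⟩)
      have h5 : 0 < slope h' 0 s := h4.2 (mem_compl_singleton_iff.2 hs.1.ne')
      rw [slope_def_field, h'0, sub_zero, sub_zero] at h5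
      have h6 : 0 < h' s := by
        have := mul_pos h5 hs.1
        rwa [div_mul_cancel₀ _ hs.1.ne'] at this
      rw [h4.1.1.deriv]
      exact h6
  have hlt : h 0 < h (δ/2) := hSM ⟨le_rfl, hb.le⟩ ⟨hb.le, le_rfl⟩ hb
  have hle : h (δ/2) ≤ h 0 := by
    refine (H ?_).1.2
    rw [Real.dist_eq, sub_zero, abs_of_nonneg hb.le]
    linarith
  linarith

lemma aux_deriv_nonneg_of_isMaxOn {g : ℝ → ℝ} {c a b : ℝ} (hab : a < b)
    (hg : HasDerivAt g c b) (hle : ∀ t ∈ Icc a b, g t ≤ g b) : 0 ≤ c := by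
  have hslope : Tendsto (slope g b) (𝓝[≠] b) (𝓝 c) := hasDerivAt_iff_tendsto_slope.1 hg
  have h2 : Tendsto (slope g b) (𝓝[<] b) (𝓝 c) :=
    hslope.mono_left (nhdsWithin_mono b fun x hx => ne_of_lt hx)
  refine ge_of_tendsto h2 ?_
  have ha : ∀ᶠ t in 𝓝[<] b, a < t :=
    eventually_nhdsWithin_of_eventually_nhds (eventually_gt_nhds hab)
  filter_upwards [ha, self_mem_nhdsWithin] with t hat htb
  have h1 : g t - g b ≤ 0 := sub_nonpos.2 (hle t ⟨hat.le, le_of_lt htb⟩)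
  have h3 : t - b < 0 := sub_neg.2 htb
  rw [slope_def_field, ← neg_div_neg_eq]
  exact div_nonneg (by linarith) (by linarith)

lemma aux_pdX_neg (d : ℕ) (u : (Fin d → ℝ) × ℝ → ℝ) (j : Fin d) (p : (Fin d → ℝ) × ℝ) :
    pdX d (fun q => -u q) j p = -pdX d u j p := by
  simp [pdX, fderiv_neg]

lemma aux_pdT_neg (d : ℕ) (u : (Fin d → ℝ) × ℝ → ℝ) (p : (Fin d → ℝ) × ℝ) :
    pdT d (fun q => -u q) p = -pdT d u p := by
  simp [pdT, fderiv_neg]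

lemma aux_pdXX_neg (d : ℕ) (u : (Fin d → ℝ) × ℝ → ℝ) (j : Fin d) (p : (Fin d → ℝ) × ℝ) :
    pdXX d (fun q => -u q) j p = -pdXX d u j p := by
  have h1 : pdX d (fun q => -u q) j = fun q => -pdX d u j q :=
    funext fun q => aux_pdX_neg d u j q
  unfold pdXX
  rw [h1, fderiv_fun_neg]
  simp

lemma aux_lapX_neg (d : ℕ) (u : (Fin d → ℝ) × ℝ → ℝ) (p : (Fin d → ℝ) × ℝ) :
    lapX d (fun q => -u q) p = -lapX d u p := by
  simp [lapX, aux_pdXX_neg]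

lemma aux_mollify_bound {d : ℕ} {ρ : (Fin d → ℝ) → ℝ} (hρ : IsMollifier d ρ)
    {ε : ℝ} (hε : 0 < ε) {u0 : (Fin d → ℝ) → ℝ} {M : ℝ} (hM : 0 ≤ M)
    (hb : ∀ᵐ y, |u0 y| ≤ M) (x : Fin d → ℝ) : |mollify d ρ ε u0 x| ≤ M := by
  obtain ⟨hρs, hρc, hρ0, hρsupp, hρint⟩ := hρ
  set c : (Fin d → ℝ) → ℝ := fun y => (ε ^ d)⁻¹ * ρ (ε⁻¹ • (x - y)) with hc
  have hεd : (0:ℝ) < ε ^ d := pow_pos hε d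
  have hcnn : ∀ y, 0 ≤ c y := fun y =>
    mul_nonneg (inv_nonneg.2 hεd.le) (hρ0 _)
  have hccont : Continuous c :=
    continuous_const.mul (hρs.continuous.comp
      (by fun_prop))
  have hcsupp : HasCompactSupport c := by
    have h1 : HasCompactSupport fun y : Fin d → ℝ => ρ (ε⁻¹ • (x - y)) :=
      hρc.comp_homeomorph ((Homeomorph.subLeft x).trans
        (Homeomorph.smulOfNeZero ε⁻¹ (inv_ne_zero hε.ne')))
    exact h1.mul_left
  have hcint : Integrable c := hccont.integrable_of_hasCompactSupport hcsupp
  have hcI : (∫ y, c y) = 1 := by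
    have h1 : (∫ y, ρ (ε⁻¹ • (x - y))) = ∫ y, ρ (ε⁻¹ • y) := by
      calc (∫ y, ρ (ε⁻¹ • (x - y))) = ∫ y, ρ (ε⁻¹ • (x + y)) := by
            rw [← integral_neg_eq_self (fun y => ρ (ε⁻¹ • (x + y))) volume]
            simp [sub_eq_add_neg]
        _ = ∫ y, ρ (ε⁻¹ • y) := integral_add_left_eq_self (fun y => ρ (ε⁻¹ • y)) x
    have h2 : (∫ y, ρ (ε⁻¹ • y)) = |((ε⁻¹ : ℝ) ^ (Module.finrank ℝ (Fin d → ℝ)))⁻¹| • ∫ y, ρ y :=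
      Measure.integral_comp_smul volume ρ ε⁻¹
    have h3 : (Module.finrank ℝ (Fin d → ℝ)) = d := by
      simp [Module.finrank_fintype_fun_eq_card]
    rw [h3] at h2
    have h4 : |((ε⁻¹ : ℝ) ^ d)⁻¹| = ε ^ d := by
      rw [← inv_pow, inv_inv, abs_of_pos hεd]
    rw [hc]
    simp only []
    rw [MeasureTheory.integral_const_mul, h1, h2, h4, hρint]
    simp
    field_simp
  by_cases hi : Integrable (fun y => u0 y * c y)
  · have h5 : |∫ y, u0 y * c y| ≤ ∫ y, |u0 y| * |c y| := by
      simpa [Real.norm_eq_abs] using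
        norm_integral_le_integral_norm (μ := volume) (fun y => u0 y * c y)
    have h6 : (∫ y, |u0 y| * |c y|) ≤ ∫ y, M * c y := by
      refine integral_mono_ae (by simpa [abs_mul] using hi.abs) (hcint.const_mul M) ?_
      filter_upwards [hb] with y hy
      rw [abs_of_nonneg (hcnn y)]
      exact mul_le_mul_of_nonneg_right hy (hcnn y)
    have h7 : (∫ y, M * c y) = M := by
      rw [MeasureTheory.integral_const_mul, hcI, mul_one]
    have : |mollify d ρ ε u0 x| = |∫ y, u0 y * c y| := rfl
    rw [this]
    linarith
  · have : mollify d ρ ε u0 x = 0 := integral_undef hi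
    rw [this]
    simpa using hM

lemma aux_oneSided {d : ℕ} {Ω : Set (Fin d → ℝ)} (hΩo : IsOpen Ω)
    (hΩb : Bornology.IsBounded Ω) {T : ℝ} (hT : 0 < T)
    (a : Fin d → ℝ → ℝ) (Bc bc : ℝ → ℝ) (hBc : ∀ s, 0 < Bc s)
    {ε : ℝ} (hε : 0 < ε) {M : ℝ} (hM : 0 ≤ M)
    {v : (Fin d → ℝ) × ℝ → ℝ}
    (hsm : ContDiffOn ℝ 2 v (closure (Ω ×ˢ Ioo (0:ℝ) T)))
    (hpde : ∀ x ∈ Ω, ∀ t ∈ Ioo (0:ℝ) T,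
      pdT d v (x, t) + ∑ j, a j (v (x, t)) * pdX d v j (x, t)
        = ε * (Bc (v (x, t)) * lapX d v (x, t)
            + bc (v (x, t)) * ∑ j, pdX d v j (x, t) ^ 2))
    (hbd : ∀ x ∈ frontier Ω, ∀ t ∈ Ioo (0:ℝ) T, v (x, t) = 0)
    (hinit : ∀ x ∈ Ω, v (x, 0) ≤ M) :
    ∀ t ∈ Ioo (0:ℝ) T, ∀ x ∈ Ω, v (x, t) ≤ M := by
  intro t₀ ht₀ x₀ hx₀
  by_contra hcon
  push_neg at hcon
  set S : Set ((Fin d → ℝ) × ℝ) := Ω ×ˢ Ioo (0:ℝ) T with hS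
  have hSo : IsOpen S := hΩo.prod isOpen_Ioo
  have hclS : closure S = closure Ω ×ˢ Icc (0:ℝ) T := by
    rw [hS, closure_prod_eq, closure_Ioo hT.ne]
  have ht₀0 : 0 < t₀ := ht₀.1
  set κ : ℝ := (v (x₀, t₀) - M) / (2 * t₀) with hκ
  have hκpos : 0 < κ := div_pos (sub_pos.2 hcon) (by positivity)
  set w : (Fin d → ℝ) × ℝ → ℝ := fun p => v p - κ * p.2 with hw
  set K : Set ((Fin d → ℝ) × ℝ) := closure Ω ×ˢ Icc 0 t₀ with hK
  have hKsub : K ⊆ closure S := by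
    rw [hclS]
    exact prod_mono Subset.rfl (Icc_subset_Icc le_rfl ht₀.2.le)
  have hKc : IsCompact K := hΩb.isCompact_closure.prod isCompact_Icc
  have hvc : ContinuousOn v (closure S) := hsm.continuousOn
  have hwc : ContinuousOn w K :=
    (hvc.mono hKsub).sub ((continuous_const.mul continuous_snd).continuousOn)
  have hKne : ((x₀, t₀) : (Fin d → ℝ) × ℝ) ∈ K := ⟨subset_closure hx₀, ⟨ht₀0.le, le_rfl⟩⟩
  obtain ⟨⟨x₁, t₁⟩, hp₁K, hp₁max⟩ := hKc.exists_isMaxOn ⟨_, hKne⟩ hwc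
  have hx₁cl : x₁ ∈ closure Ω := hp₁K.1
  have ht₁ : t₁ ∈ Icc 0 t₀ := hp₁K.2
  have hwM : M < w (x₁, t₁) := by
    have h1 : w (x₀, t₀) ≤ w (x₁, t₁) := hp₁max hKne
    have h2 : M < w (x₀, t₀) := by
      have h3 : w (x₀, t₀) = v (x₀, t₀) - κ * t₀ := rfl
      have h4 : κ * t₀ = (v (x₀, t₀) - M) / 2 := by
        rw [hκ]; field_simp
      rw [h3, h4]
      linarith
    linarith
  by_cases hx₁Ω : x₁ ∈ Ω
  · rcases eq_or_lt_of_le ht₁.1 with ht10 | ht10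
    · -- x₁ ∈ Ω, t₁ = 0 : contradicts initial bound
      have h1 : w (x₁, t₁) = v (x₁, 0) := by
        rw [hw, ← ht10]; simp
      have h2 := hinit x₁ hx₁Ω
      rw [h1] at hwM
      linarith
    · -- interior case: use the PDE
      have ht₁T : t₁ ∈ Ioo (0:ℝ) T := ⟨ht10, lt_of_le_of_lt ht₁.2 ht₀.2⟩
      have hpS : ((x₁, t₁) : (Fin d → ℝ) × ℝ) ∈ S := ⟨hx₁Ω, ht₁T⟩
      have hCD : ContDiffAt ℝ 2 v (x₁, t₁) :=
        hsm.contDiffAt (mem_of_superset (hSo.mem_nhds hpS) subset_closure)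
      have hvd : ∀ᶠ p in 𝓝 ((x₁, t₁) : (Fin d → ℝ) × ℝ), DifferentiableAt ℝ v p := by
        filter_upwards [hCD.eventually (by norm_num)] with p hp
        exact hp.differentiableAt (by norm_num)
      have key : ∀ j, pdX d v j (x₁, t₁) = 0 ∧ pdXX d v j (x₁, t₁) ≤ 0 := by
        intro j
        set e : Fin d → ℝ := Pi.single j 1 with he
        set A : ℝ → (Fin d → ℝ) × ℝ := fun s => (x₁ + s • e, t₁) with hA
        have hA0 : A 0 = (x₁, t₁) := by simp [hA]
        have hAc : Continuous A :=
          (continuous_const.add (continuous_id.smul continuous_const)).prodMk continuous_const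
        have hAd : ∀ s : ℝ, HasDerivAt A ((e, 0) : (Fin d → ℝ) × ℝ) s := by
          intro s
          have h1 : HasDerivAt (fun s : ℝ => x₁ + s • e) e s := by
            simpa using (((hasDerivAt_id s).smul_const e).const_add x₁)
          exact h1.prodMk (hasDerivAt_const s t₁)
        have htendA : Tendsto A (𝓝 0) (𝓝 ((x₁, t₁) : (Fin d → ℝ) × ℝ)) := by
          rw [← hA0]; exact hAc.continuousAt
        have hmem : ∀ᶠ s in 𝓝 (0:ℝ), A s ∈ S := htendA.eventually (hSo.eventually_mem hpS)
        have hdiff : ∀ᶠ s in 𝓝 (0:ℝ), DifferentiableAt ℝ v (A s) := htendA.eventually hvd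
        have hd : ∀ᶠ s in 𝓝 (0:ℝ), HasDerivAt (fun s => v (A s)) (pdX d v j (A s)) s := by
          filter_upwards [hdiff] with s hs
          exact hs.hasFDerivAt.comp_hasDerivAt s (hAd s)
        have hmax : IsLocalMax (fun s => v (A s)) 0 := by
          have : ∀ᶠ s in 𝓝 (0:ℝ), v (A s) ≤ v (A 0) := by
            filter_upwards [hmem] with s hs
            have h1 : A s ∈ K := ⟨subset_closure hs.1, ⟨ht₁.1, ht₁.2⟩⟩
            have h2 : w (A s) ≤ w (x₁, t₁) := hp₁max h1
            rw [hA0]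
            have h3 : w (A s) = v (A s) - κ * t₁ := rfl
            have h4 : w (x₁, t₁) = v (x₁, t₁) - κ * t₁ := rfl
            rw [h3, h4] at h2
            linarith
          exact this
        have h1zero : pdX d v j (x₁, t₁) = 0 := by
          have := hmax.hasDerivAt_eq_zero hd.self_of_nhds
          rwa [hA0] at this
        have hpdXd : DifferentiableAt ℝ (pdX d v j) (x₁, t₁) := by
          have h2 : ContDiffAt ℝ 1 (fderiv ℝ v) (x₁, t₁) := hCD.fderiv_right (by norm_num)
          have h3 : ContDiffAt ℝ 1 (pdX d v j) (x₁, t₁) := h2.clm_apply contDiffAt_const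
          exact h3.differentiableAt (by norm_num)
        have hd' : HasDerivAt (fun s => pdX d v j (A s)) (pdXX d v j (x₁, t₁)) 0 := by
          have hl : HasFDerivAt (pdX d v j) (fderiv ℝ (pdX d v j) (x₁, t₁)) (A 0) :=
            hA0 ▸ hpdXd.hasFDerivAt
          exact hl.comp_hasDerivAt 0 (hAd 0)
        exact ⟨h1zero, aux_second_deriv_nonpos hmax hd hd'⟩
      -- time derivative bound
      have htd : κ ≤ pdT d v (x₁, t₁) := by
        have hdv : DifferentiableAt ℝ v (x₁, t₁) := hvd.self_of_nhds
        have hA2 : HasDerivAt (fun t : ℝ => ((x₁, t) : (Fin d → ℝ) × ℝ))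
            (((0 : Fin d → ℝ), (1:ℝ))) t₁ :=
          (hasDerivAt_const t₁ x₁).prodMk (hasDerivAt_id t₁)
        have h1 : HasDerivAt (fun t => v (x₁, t)) (pdT d v (x₁, t₁)) t₁ := by
          exact hdv.hasFDerivAt.comp_hasDerivAt t₁ hA2
        have h2 : HasDerivAt (fun t : ℝ => κ * t) κ t₁ := by
          simpa using (hasDerivAt_id t₁).const_mul κ
        have hgd : HasDerivAt (fun t => v (x₁, t) - κ * t) (pdT d v (x₁, t₁) - κ) t₁ :=
          h1.sub h2
        have hle : ∀ t ∈ Icc (0:ℝ) t₁, v (x₁, t) - κ * t ≤ v (x₁, t₁) - κ * t₁ := by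
          intro t ht
          have h3 : ((x₁, t) : (Fin d → ℝ) × ℝ) ∈ K :=
            ⟨subset_closure hx₁Ω, ⟨ht.1, le_trans ht.2 ht₁.2⟩⟩
          exact hp₁max h3
        have := aux_deriv_nonneg_of_isMaxOn ht10 hgd hle
        linarith
      -- plug into the PDE
      have hpde1 := hpde x₁ hx₁Ω t₁ ht₁T
      have hsum1 : (∑ j, a j (v (x₁, t₁)) * pdX d v j (x₁, t₁)) = 0 :=
        Finset.sum_eq_zero fun j _ => by rw [(key j).1, mul_zero]
      have hsum2 : (∑ j, pdX d v j (x₁, t₁) ^ 2) = 0 :=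
        Finset.sum_eq_zero fun j _ => by rw [(key j).1]; ring
      rw [hsum1, hsum2, add_zero, mul_zero, add_zero] at hpde1
      have hlap : lapX d v (x₁, t₁) ≤ 0 :=
        Finset.sum_nonpos fun j _ => (key j).2
      have h5 : Bc (v (x₁, t₁)) * lapX d v (x₁, t₁) ≤ 0 :=
        mul_nonpos_iff.2 (Or.inl ⟨(hBc _).le, hlap⟩)
      have h6 : ε * (Bc (v (x₁, t₁)) * lapX d v (x₁, t₁)) ≤ 0 :=
        mul_nonpos_iff.2 (Or.inl ⟨hε.le, h5⟩)
      linarith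
  · -- x₁ on the boundary
    have hx₁f : x₁ ∈ frontier Ω := by
      rw [hΩo.frontier_eq]
      exact ⟨hx₁cl, hx₁Ω⟩
    rcases eq_or_lt_of_le ht₁.1 with ht10 | ht10
    · -- t₁ = 0 : limit of initial values
      have hvle : v (x₁, 0) ≤ M := by
        have hmemcl : ((x₁, (0:ℝ)) : (Fin d → ℝ) × ℝ) ∈ closure S := by
          rw [hclS]
          exact ⟨hx₁cl, ⟨le_rfl, hT.le⟩⟩
        have hcw : ContinuousWithinAt v (closure S) (x₁, 0) :=
          hvc.continuousWithinAt hmemcl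
        have hne : (𝓝[Ω] x₁).NeBot := mem_closure_iff_nhdsWithin_neBot.1 hx₁cl
        have htend : Tendsto (fun x : Fin d → ℝ => ((x, (0:ℝ)) : (Fin d → ℝ) × ℝ))
            (𝓝[Ω] x₁) (𝓝[closure S] (x₁, 0)) := by
          apply tendsto_nhdsWithin_of_tendsto_nhds_of_eventually_within
          · exact ((continuous_id.prodMk continuous_const).tendsto x₁).mono_left
              nhdsWithin_le_nhds
          · filter_upwards [self_mem_nhdsWithin] with x hx
            rw [hclS]
            exact ⟨subset_closure hx, ⟨le_rfl, hT.le⟩⟩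
        have htv : Tendsto (fun x : Fin d → ℝ => v (x, 0)) (𝓝[Ω] x₁) (𝓝 (v (x₁, 0))) :=
          hcw.tendsto.comp htend
        refine le_of_tendsto htv ?_
        filter_upwards [self_mem_nhdsWithin] with x hx
        exact hinit x hx
      have h1 : w (x₁, t₁) = v (x₁, 0) := by
        rw [hw, ← ht10]; simp
      rw [h1] at hwM
      linarith
    · -- 0 < t₁ : boundary value is 0
      have hvz : v (x₁, t₁) = 0 := hbd x₁ hx₁f t₁ ⟨ht10, lt_of_le_of_lt ht₁.2 ht₀.2⟩
      have h1 : w (x₁, t₁) = -(κ * t₁) := by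
        rw [hw]; simp [hvz]
      rw [h1] at hwM
      nlinarith

/-- maximum principle for the regularized viscosity problem with mollified
`L^∞` compactly supported initial data: for a.e. `t ∈ (0,T)`,
`sup_{x ∈ Ω} |u^ε(x,t)| ≤ ‖u₀‖_{L^∞(Ω)}`. -/
theorem stmt1 (d : ℕ) (Ω : Set (Fin d → ℝ)) (hΩo : IsOpen Ω)
    (hΩb : Bornology.IsBounded Ω) (T : ℝ) (hT : 0 < T)
    (f : Fin d → ℝ → ℝ) (hf : FluxOK d f)
    (B : ℝ → ℝ) (r : ℝ) (hB : DiffusionOK B r)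
    (ε : ℝ) (hε : 0 < ε)
    (ρ : (Fin d → ℝ) → ℝ) (hρ : IsMollifier d ρ)
    (u0 : (Fin d → ℝ) → ℝ) (hu0 : LinfCompactData d Ω u0)
    (u : (Fin d → ℝ) × ℝ → ℝ)
    (hu : IsSolution d Ω T f B ε (mollify d ρ ε u0) u) :
    ∀ᵐ t ∂(volume.restrict (Ioo (0:ℝ) T)), ∀ x ∈ Ω, |u (x, t)| ≤ linf d Ω u0 := by
  rcases Set.eq_empty_or_nonempty Ω with hΩe | hΩne
  · filter_upwards with t
    intro x hx
    exact absurd hx (by simp [hΩe])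
  obtain ⟨hB1, ⟨MB, hB2⟩, hr, hBr⟩ := hB
  obtain ⟨⟨M₀, hM₀⟩, hu0zero, K₀, hK₀⟩ := hu0
  set M : ℝ := linf d Ω u0 with hMdef
  have hbdd : IsBoundedUnder (· ≤ ·) (ae (volume.restrict Ω)) (fun x => |u0 x|) :=
    isBoundedUnder_of_eventually_le (a := M₀) (ae_restrict_of_ae hM₀)
  have hMlim : M = Filter.limsup (fun x => |u0 x|) (ae (volume.restrict Ω)) := rfl
  have hMnonneg : 0 ≤ M := by
    have hne : (ae (volume.restrict Ω)).NeBot := by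
      refine ae_neBot.2 ?_
      intro h
      have h1 := hΩo.measure_pos volume hΩne
      have h2 : volume.restrict Ω Set.univ = volume Ω := by
        rw [Measure.restrict_apply_univ]
      rw [h] at h2
      simp at h2
      rw [← h2] at h1
      exact lt_irrefl _ h1
    rw [hMlim]
    exact Filter.le_limsup_of_frequently_le
      ((Filter.Eventually.of_forall (fun x => abs_nonneg (u0 x))).frequently) hbdd
  have haeM : ∀ᵐ x ∂(volume.restrict Ω), |u0 x| ≤ M := by
    have h1 : ∀ n : ℕ, ∀ᵐ x ∂(volume.restrict Ω), |u0 x| < M + 1/(n+1) := by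
      intro n
      refine Filter.eventually_lt_of_limsup_lt ?_ hbdd
      rw [← hMlim]
      have : (0:ℝ) < 1/(n+1) := by positivity
      linarith
    rw [← MeasureTheory.ae_all_iff] at h1
    filter_upwards [h1] with x hx
    by_contra hlt
    push_neg at hlt
    obtain ⟨n, hn⟩ := exists_nat_one_div_lt (sub_pos.2 hlt)
    linarith [hx n]
  have haeG : ∀ᵐ x, |u0 x| ≤ M := by
    rw [ae_restrict_iff' hΩo.measurableSet] at haeM
    filter_upwards [haeM] with x hx
    by_cases hxΩ : x ∈ Ω
    · exact hx hxΩ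
    · rw [hu0zero x hxΩ]
      simpa using hMnonneg
  have hmb : ∀ x, |mollify d ρ ε u0 x| ≤ M := fun x =>
    aux_mollify_bound hρ hε hMnonneg haeG x
  have hBpos : ∀ s, 0 < B s := fun s => lt_of_lt_of_le hr (hBr s)
  have hupper := aux_oneSided hΩo hΩb hT (fun j => deriv (f j)) B (deriv B)
    hBpos hε hMnonneg hu.smooth hu.pde hu.bdry
    (fun x hx => by rw [hu.init x hx]; exact (abs_le.1 (hmb x)).2)
  have hpde' : ∀ x ∈ Ω, ∀ t ∈ Ioo (0:ℝ) T,
      pdT d (fun p => -u p) (x, t)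
        + ∑ j, (fun s => deriv (f j) (-s)) ((fun p => -u p) (x, t))
            * pdX d (fun p => -u p) j (x, t)
      = ε * ((fun s => B (-s)) ((fun p => -u p) (x, t)) * lapX d (fun p => -u p) (x, t)
          + (fun s => -deriv B (-s)) ((fun p => -u p) (x, t))
              * ∑ j, pdX d (fun p => -u p) j (x, t) ^ 2) := by
    intro x hx t ht
    have base := hu.pde x hx t ht
    simp only [aux_pdT_neg, aux_pdX_neg, aux_lapX_neg, neg_neg]
    have e1 : (∑ j, deriv (f j) (u (x, t)) * -pdX d u j (x, t))
        = -∑ j, deriv (f j) (u (x, t)) * pdX d u j (x, t) := by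
      rw [← Finset.sum_neg_distrib]
      exact Finset.sum_congr rfl fun j _ => by ring
    have e2 : (∑ j, (-pdX d u j (x, t)) ^ 2) = ∑ j, pdX d u j (x, t) ^ 2 :=
      Finset.sum_congr rfl fun j _ => by ring
    rw [e1, e2]
    linear_combination -base
  have hlower := aux_oneSided hΩo hΩb hT (fun j => fun s => deriv (f j) (-s))
    (fun s => B (-s)) (fun s => -deriv B (-s)) (fun s => hBpos (-s)) hε hMnonneg
    (v := fun p => -u p) hu.smooth.neg hpde'
    (fun x hx t ht => by rw [hu.bdry x hx t ht]; exact neg_zero)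
    (fun x hx => by
      have h1 : (fun p => -u p) (x, 0) = -(u (x, 0)) := rfl
      rw [hu.init x hx]
      linarith [(abs_le.1 (hmb x)).1])
  refine (ae_restrict_iff' measurableSet_Ioo).2 (Filter.Eventually.of_forall ?_)
  intro t ht x hx
  have h1 := hupper t ht x hx
  have h2 := hlower t ht x hx
  have h3 : -(u (x, t)) ≤ M := h2
  exact abs_le.2 ⟨by linarith, h1⟩


end
end
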